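/- arXiv:2003.03093 — 2 statements merged into one kernel-verified Lean document; each statement's English description precedes it below -/
import Mathlib

section
/- (Euclidean case of Proposition 4.1) Let n ≥ 2 and let Ω ⊂ ℝⁿ be a bounded open set with Lipschitz boundary. Let p ∈ ℝⁿ be the barycenter of ∂Ω with respect to H^{n−1}, i.e. ∫_{∂Ω} (x − p) dH^{n−1}(x) = 0. Then σ₁(Ω) ≤ n |Ω| / ∫_{∂Ω} |x − p|² dH^{n−1}(x), where |Ω| is the Lebesgue measure of Ω. -/
/-!
Since `p` is the barycenter of `∂Ω`, each coordinate `x ↦ (x - p)ᵢ` has mean zero on `∂Ω`; its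
gradient is a unit covector, so its Rayleigh quotient is `|Ω| / ∫_{∂Ω} (x - p)ᵢ²`. These `n`
boundary integrals add up to `∫_{∂Ω} |x - p|²`, so the largest of them is at least `1/n` of it.
All boundary integrals are genuine because `H^{n-1}(∂Ω) < ∞`: the compact boundary is covered by
finitely many pieces of Lipschitz graphs over hyperplanes.
-/

open MeasureTheory Metric Set

/-- A bounded open set `Ω ⊂ ℝⁿ` has Lipschitz boundary if near each boundary point, after
choosing a unit direction `v`, the set `Ω` is locally the open subgraph
`{ y : f(y - ⟪y,v⟫ v) < ⟪y,v⟫ }` of a Lipschitz function `f`. -/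
def HasLipschitzBoundary {n : ℕ} (Ω : Set (EuclideanSpace ℝ (Fin n))) : Prop :=
  ∀ x ∈ frontier Ω, ∃ (v : EuclideanSpace ℝ (Fin n)) (f : EuclideanSpace ℝ (Fin n) → ℝ)
    (K : NNReal) (U : Set (EuclideanSpace ℝ (Fin n))),
      ‖v‖ = 1 ∧ LipschitzWith K f ∧ IsOpen U ∧ x ∈ U ∧
      Ω ∩ U = {y ∈ U | f (y - (inner ℝ y v : ℝ) • v) < (inner ℝ y v : ℝ)}

/-- The first nonzero Steklov eigenvalue of a bounded Lipschitz domain `Ω ⊂ ℝⁿ`, via the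
variational characterization: the infimum of the Rayleigh quotients
`(∫_Ω |∇u|² dx) / (∫_{∂Ω} u² dH^{n-1})` over Lipschitz functions `u` with
`∫_{∂Ω} u dH^{n-1} = 0` and `∫_{∂Ω} u² dH^{n-1} > 0`. -/
noncomputable def steklovFirst {n : ℕ} (Ω : Set (EuclideanSpace ℝ (Fin n))) : ℝ :=
  sInf { q : ℝ | ∃ (u : EuclideanSpace ℝ (Fin n) → ℝ) (K : NNReal), LipschitzWith K u ∧
    (∫ x in frontier Ω, u x ∂(μH[(n : ℝ) - 1])) = 0 ∧
    (0 < ∫ x in frontier Ω, (u x) ^ 2 ∂(μH[(n : ℝ) - 1])) ∧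
    q = (∫ x in Ω, ‖fderiv ℝ u x‖ ^ 2) /
      ∫ x in frontier Ω, (u x) ^ 2 ∂(μH[(n : ℝ) - 1]) }

open Module
open scoped RealInnerProductSpace

section LipschitzGraph

variable {E : Type*} [NormedAddCommGroup E] [InnerProductSpace ℝ E] [FiniteDimensional ℝ E]
  [MeasurableSpace E] [BorelSpace E]

theorem hausdorffMeasure_lipschitzGraph_lt_top {v : E} (hv : ‖v‖ = 1) {f : E → ℝ} {K : NNReal}
    (hf : LipschitzWith K f) {s : Set E} (hs : Bornology.IsBounded s) :
    μH[(finrank ℝ E - 1 : ℕ)] {y ∈ s | f (y - ⟪y, v⟫ • v) = ⟪y, v⟫} < ⊤ := by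
  set W := (ℝ ∙ v)ᗮ
  set P := W.orthogonalProjectionOnto
  have hP : ∀ y, (P y : E) = y - ⟪y, v⟫ • v := fun y => by
    rw [Submodule.coe_orthogonalProjectionOnto_apply, Submodule.starProjection_orthogonal_val,
      Submodule.starProjection_singleton, hv, real_inner_comm]
    simp
  have hW : finrank ℝ W = finrank ℝ E - 1 := by
    rw [← (ℝ ∙ v).finrank_add_finrank_orthogonal,
      finrank_span_singleton (norm_ne_zero_iff.mp (hv ▸ one_ne_zero)), add_tsub_cancel_left]
  set Ψ : W → E := fun w => (w : E) + f w • v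
  have hΨ : LipschitzWith (1 + ‖ContinuousLinearMap.toSpanSingleton ℝ v‖₊ * (K * 1)) Ψ :=
    isometry_subtype_coe.lipschitz.add ((ContinuousLinearMap.toSpanSingleton ℝ v).lipschitz.comp
      (hf.comp isometry_subtype_coe.lipschitz))
  have hgraph : {y ∈ s | f (y - ⟪y, v⟫ • v) = ⟪y, v⟫} ⊆ Ψ '' (P '' s) := by
    rintro y ⟨hys, hy⟩
    refine ⟨P y, mem_image_of_mem P hys, ?_⟩
    simp only [Ψ, hP, hy]
    abel
  rw [← hW]
  calc μH[(finrank ℝ W : ℝ)] {y ∈ s | f (y - ⟪y, v⟫ • v) = ⟪y, v⟫}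
      ≤ μH[(finrank ℝ W : ℝ)] (Ψ '' (P '' s)) := measure_mono hgraph
    _ ≤ _ * μH[(finrank ℝ W : ℝ)] (P '' s) := hΨ.hausdorffMeasure_image_le (Nat.cast_nonneg _) _
    _ < ⊤ := ENNReal.mul_lt_top
        (ENNReal.rpow_lt_top_of_nonneg (Nat.cast_nonneg _) ENNReal.coe_ne_top)
        (P.lipschitz.isBounded_image hs).measure_lt_top

end LipschitzGraph

theorem frontier_inter_subset_of_inter_eq_setOf_lt {X α : Type*} [TopologicalSpace X]
    [LinearOrder α] [TopologicalSpace α] [OrderClosedTopology α] {Ω U : Set X} {g h : X → α}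
    (hU : IsOpen U) (hg : Continuous g) (hh : Continuous h) (hΩU : Ω ∩ U = {y ∈ U | g y < h y}) :
    frontier Ω ∩ U ⊆ {y | g y = h y} := by
  rintro y ⟨hyΩ, hyU⟩
  rcases lt_trichotomy (g y) (h y) with hlt | heq | hgt
  · have hinterior : U ∩ {y | g y < h y} ⊆ interior Ω :=
      interior_maximal (fun z hz => (hΩU.symm ▸ hz : z ∈ Ω ∩ U).1) (hU.inter (isOpen_lt hg hh))
    exact absurd (hinterior ⟨hyU, hlt⟩) hyΩ.2
  · exact heq
  · obtain ⟨z, ⟨hzU, hz⟩, hzΩ⟩ :=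
      mem_closure_iff.mp hyΩ.1 _ (hU.inter (isOpen_lt hh hg)) ⟨hyU, hgt⟩
    have : z ∈ Ω ∩ U := ⟨hzΩ, hzU⟩
    rw [hΩU] at this
    exact (lt_asymm hz this.2).elim

theorem HasLipschitzBoundary.hausdorffMeasure_frontier_lt_top {n : ℕ}
    {Ω : Set (EuclideanSpace ℝ (Fin n))} (hΩ : HasLipschitzBoundary Ω)
    (hb : Bornology.IsBounded Ω) : μH[(n : ℝ) - 1] (frontier Ω) < ⊤ := by
  have hFb : Bornology.IsBounded (frontier Ω) := hb.closure.subset frontier_subset_closure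
  refine (isCompact_of_isClosed_isBounded isClosed_frontier hFb).measure_lt_top_of_nhdsWithin
    fun x hx => ?_
  obtain ⟨v, f, K, U, hv, hf, hU, hxU, hΩU⟩ := hΩ x hx
  have hdim : (n : ℝ) - 1 = ((finrank ℝ (EuclideanSpace ℝ (Fin n)) - 1 : ℕ) : ℝ) := by
    have hpos : 0 < finrank ℝ (EuclideanSpace ℝ (Fin n)) :=
      finrank_pos_iff_exists_ne_zero.mpr ⟨v, norm_ne_zero_iff.mp (hv ▸ one_ne_zero)⟩
    rw [finrank_euclideanSpace_fin] at hpos ⊢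
    rw [Nat.cast_sub hpos, Nat.cast_one]
  refine ⟨frontier Ω ∩ U, inter_mem_nhdsWithin _ (hU.mem_nhds hxU), ?_⟩
  have hgraph := frontier_inter_subset_of_inter_eq_setOf_lt hU
    (hf.continuous.comp (by fun_prop)) (by fun_prop) hΩU
  have hsub : frontier Ω ∩ U ⊆ {y ∈ frontier Ω | f (y - ⟪y, v⟫ • v) = ⟪y, v⟫} :=
    fun y hy => ⟨hy.1, hgraph hy⟩
  rw [hdim]
  exact (measure_mono hsub).trans_lt (hausdorffMeasure_lipschitzGraph_lt_top hv hf hFb)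

theorem Finset.exists_sum_le_card_mul {ι R : Type*} [Semiring R] [LinearOrder R]
    [IsOrderedRing R] {s : Finset ι} {f : ι → R} (h : 0 < ∑ i ∈ s, f i) :
    ∃ i ∈ s, ∑ j ∈ s, f j ≤ s.card * f i := by
  have hs : s.Nonempty := nonempty_of_sum_ne_zero h.ne'
  obtain ⟨i, hi, hmax⟩ := s.exists_max_image f hs
  exact ⟨i, hi, (sum_le_card_nsmul s f (f i) hmax).trans_eq (nsmul_eq_mul _ _)⟩

section Steklov

variable {n : ℕ} {Ω : Set (EuclideanSpace ℝ (Fin n))}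

theorem steklovFirst_le {u : EuclideanSpace ℝ (Fin n) → ℝ} {K : NNReal} (hu : LipschitzWith K u)
    (hmean : ∫ x in frontier Ω, u x ∂μH[(n : ℝ) - 1] = 0)
    (hpos : 0 < ∫ x in frontier Ω, u x ^ 2 ∂μH[(n : ℝ) - 1]) :
    steklovFirst Ω ≤
      (∫ x in Ω, ‖fderiv ℝ u x‖ ^ 2) / ∫ x in frontier Ω, u x ^ 2 ∂μH[(n : ℝ) - 1] := by
  refine csInf_le ⟨0, ?_⟩ ⟨u, K, hu, hmean, hpos, rfl⟩
  rintro q ⟨w, -, -, -, hw, rfl⟩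
  exact div_nonneg (integral_nonneg fun _ => sq_nonneg _) hw.le

/-- A boundary function of mean zero then vanishes at `p`, so no test function is admissible
and the infimum is the junk value `sInf ∅ = 0`. -/
theorem steklovFirst_eq_zero_of_ae_eq {p : EuclideanSpace ℝ (Fin n)}
    (h : ∀ᵐ x ∂(μH[(n : ℝ) - 1].restrict (frontier Ω)), x = p) : steklovFirst Ω = 0 := by
  have hconst : ∀ g : EuclideanSpace ℝ (Fin n) → ℝ, ∫ x in frontier Ω, g x ∂μH[(n : ℝ) - 1] =
      (μH[(n : ℝ) - 1].restrict (frontier Ω)).real univ * g p := fun g => by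
    rw [integral_congr_ae (h.mono fun x hx => congrArg g hx), integral_const, smul_eq_mul]
  unfold steklovFirst
  convert Real.sInf_empty
  refine eq_empty_of_forall_notMem ?_
  rintro q ⟨u, K, -, hmean, hpos, -⟩
  rw [hconst] at hmean hpos
  have : (μH[(n : ℝ) - 1].restrict (frontier Ω)).real univ * u p ^ 2 = 0 := by
    rw [sq, ← mul_assoc, hmean, zero_mul]
  exact hpos.ne' this

theorem steklovFirst_le_volume_div {p e : EuclideanSpace ℝ (Fin n)} (he : ‖e‖ = 1)
    (hintegrable : IntegrableOn (fun x => x - p) (frontier Ω) μH[(n : ℝ) - 1])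
    (hbary : ∫ x in frontier Ω, (x - p) ∂μH[(n : ℝ) - 1] = 0)
    (hpos : 0 < ∫ x in frontier Ω, ⟪e, x - p⟫ ^ 2 ∂μH[(n : ℝ) - 1]) :
    steklovFirst Ω ≤ (volume Ω).toReal / ∫ x in frontier Ω, ⟪e, x - p⟫ ^ 2 ∂μH[(n : ℝ) - 1] := by
  set L := innerSL ℝ e
  have hfderiv : ∀ x, fderiv ℝ (fun y => ⟪e, y - p⟫) x = L := fun x => by
    simp_rw [inner_sub_right]
    exact (L.hasFDerivAt.sub_const _).fderiv
  have hmean : ∫ x in frontier Ω, ⟪e, x - p⟫ ∂μH[(n : ℝ) - 1] = 0 := by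
    rw [integral_inner hintegrable, hbary, inner_zero_right]
  have hdirichlet : ∫ x in Ω, ‖fderiv ℝ (fun y => ⟪e, y - p⟫) x‖ ^ 2 = (volume Ω).toReal := by
    simp_rw [hfderiv, L, innerSL_apply_norm, he]
    simp [measureReal_def]
  rw [← hdirichlet]
  exact steklovFirst_le (L.lipschitz.comp (LipschitzWith.id.sub (LipschitzWith.const p))) hmean hpos

end Steklov

theorem steklov_le_moment_bound_general
    (n : ℕ) (Ω : Set (EuclideanSpace ℝ (Fin n)))
    (hbounded : Bornology.IsBounded Ω)
    (hlip : HasLipschitzBoundary Ω) (p : EuclideanSpace ℝ (Fin n))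
    (hbary : (∫ x in frontier Ω, (x - p) ∂(μH[(n : ℝ) - 1])) = 0) :
    steklovFirst Ω ≤
      (n : ℝ) * (volume Ω).toReal /
        ∫ x in frontier Ω, ‖x - p‖ ^ 2 ∂(μH[(n : ℝ) - 1]) := by
  have hF : IsCompact (frontier Ω) := isCompact_of_isClosed_isBounded isClosed_frontier
    (hbounded.closure.subset frontier_subset_closure)
  have hintegrable {F : Type} [NormedAddCommGroup F] {g : EuclideanSpace ℝ (Fin n) → F}
      (hg : Continuous g) : IntegrableOn g (frontier Ω) μH[(n : ℝ) - 1] :=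
    hg.continuousOn.integrableOn_of_subset_isCompact hF hF.measurableSet subset_rfl
      (hlip.hausdorffMeasure_frontier_lt_top hbounded).ne
  set b := EuclideanSpace.basisFun (Fin n) ℝ
  set I : Fin n → ℝ := fun i => ∫ x in frontier Ω, ⟪b i, x - p⟫ ^ 2 ∂μH[(n : ℝ) - 1]
  have hsum : ∑ i, I i = ∫ x in frontier Ω, ‖x - p‖ ^ 2 ∂μH[(n : ℝ) - 1] := by
    rw [← integral_finsetSum _ fun i _ => hintegrable (by fun_prop)]
    simp_rw [← b.sum_sq_norm_inner_right, Real.norm_eq_abs, sq_abs]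
  rcases (integral_nonneg fun x => sq_nonneg ‖x - p‖ :
      0 ≤ ∫ x in frontier Ω, ‖x - p‖ ^ 2 ∂μH[(n : ℝ) - 1]).eq_or_lt with hS | hS
  · rw [← hS, div_zero, steklovFirst_eq_zero_of_ae_eq (p := p)]
    filter_upwards [(integral_eq_zero_iff_of_nonneg (fun x => sq_nonneg _)
      (hintegrable ((continuous_id.sub continuous_const).norm.pow 2))).mp hS.symm] with x hx
    simpa [sub_eq_zero] using hx
  · rw [← hsum] at hS ⊢
    obtain ⟨i, -, hi⟩ := Finset.exists_sum_le_card_mul hS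
    rw [Finset.card_univ, Fintype.card_fin] at hi
    have hIi : 0 < I i := pos_of_mul_pos_right (hS.trans_le hi) n.cast_nonneg
    calc steklovFirst Ω ≤ (volume Ω).toReal / I i :=
          steklovFirst_le_volume_div (b.orthonormal.1 i) (hintegrable (by fun_prop)) hbary hIi
      _ ≤ n * (volume Ω).toReal / ∑ i, I i := by
          rw [div_le_div_iff₀ hIi hS]
          nlinarith [mul_le_mul_of_nonneg_left hi (volume Ω).toReal_nonneg]

/-- Euclidean case of Proposition 4.1: if `p` is the barycenter of `∂Ω` with respect to
`H^{n-1}`, then `σ₁(Ω) ≤ n |Ω| / ∫_{∂Ω} |x - p|² dH^{n-1}`. -/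
theorem steklov_le_moment_bound
    (n : ℕ) (hn : 2 ≤ n) (Ω : Set (EuclideanSpace ℝ (Fin n)))
    (hopen : IsOpen Ω) (hbounded : Bornology.IsBounded Ω)
    (hlip : HasLipschitzBoundary Ω) (p : EuclideanSpace ℝ (Fin n))
    (hbary : (∫ x in frontier Ω, (x - p) ∂(μH[(n : ℝ) - 1])) = 0) :
    steklovFirst Ω ≤
      (n : ℝ) * (volume Ω).toReal /
        ∫ x in frontier Ω, ‖x - p‖ ^ 2 ∂(μH[(n : ℝ) - 1]) :=
  steklov_le_moment_bound_general n Ω hbounded hlip p hbary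
end

section
/- (Positivity of the radial Steklov eigenfunction profile) Let κ ≤ 0, let n ≥ 2 be an integer, and let F : [0,∞) → ℝ solve the initial value problem F''(r) + (n−1)(sn_κ'(r)/sn_κ(r)) F'(r) − ((n−1)/sn_κ(r)²) F(r) = 0 on (0,∞) with F(0) = 0 and F'(0) = 1. Then F(r) > 0 for every r > 0. -/
open Set

/-- The comparison sine function `sn_κ` for `κ ≤ 0`: `sn_0(t) = t` and
`sn_κ(t) = sinh(√(-κ) t)/√(-κ)` for `κ < 0`. -/
noncomputable def snk (κ : ℝ) (t : ℝ) : ℝ :=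
  if κ = 0 then t else Real.sinh (Real.sqrt (-κ) * t) / Real.sqrt (-κ)

/-!
With `m = n - 1` the equation is the divergence-form identity `(sn_κ^m F')' = m sn_κ^m F / sn_κ²`,
so `sn_κ^m F'` is nondecreasing on any interval `(0, b)` where `F > 0`. Since `F'(0) = 1`, `F` is
positive just after `0`. At a first zero `b` of `F`, the mean value theorem gives points
`d < c < b` with `F'(d) > 0 > F'(c)`, which contradicts the monotonicity of `sn_κ^m F'`.
-/

open Filter Topology

lemma snk_pos {κ : ℝ} (hκ : κ ≤ 0) {r : ℝ} (hr : 0 < r) : 0 < snk κ r := by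
  unfold snk
  split_ifs with h
  · exact hr
  · have hs : 0 < Real.sqrt (-κ) := Real.sqrt_pos.mpr (by linarith [lt_of_le_of_ne hκ h])
    exact div_pos (Real.sinh_pos_iff.mpr (mul_pos hs hr)) hs

lemma differentiable_snk (κ : ℝ) : Differentiable ℝ (snk κ) := by
  unfold snk
  split_ifs
  · exact differentiable_id
  · exact ((differentiable_id.const_mul _).sinh).div_const _

lemma hasDerivAt_pow_mul_deriv_of_ode {s F : ℝ → ℝ} {m : ℕ} {r : ℝ}
    (hs : DifferentiableAt ℝ s r) (hs0 : s r ≠ 0)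
    (hF : HasDerivAt (deriv F) (deriv (deriv F) r) r)
    (hode : deriv (deriv F) r + m * (deriv s r / s r) * deriv F r - (m / s r ^ 2) * F r = 0) :
    HasDerivAt (fun t => s t ^ m * deriv F t) (m * s r ^ m / s r ^ 2 * F r) r := by
  have hF'' : deriv (deriv F) r = m / s r ^ 2 * F r - m * (deriv s r / s r) * deriv F r := by
    linarith
  refine ((hs.hasDerivAt.pow m).mul hF).congr_deriv ?_
  rw [hF'']
  simp only [Pi.pow_apply]
  rcases m with _ | m
  · simp
  · field_simp
    push_cast
    ring

lemma eventually_pos_of_hasDerivWithinAt_Ici {F : ℝ → ℝ} {a c : ℝ} (ha : F a = 0)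
    (hF : HasDerivWithinAt F c (Ici a) a) (hc : 0 < c) : ∀ᶠ r in 𝓝[>] a, 0 < F r := by
  have hslope : Tendsto (slope F a) (𝓝[>] a) (𝓝 c) :=
    (hasDerivWithinAt_iff_tendsto_slope' self_notMem_Ioi).mp (hF.mono Ioi_subset_Ici_self)
  filter_upwards [hslope.eventually (eventually_gt_nhds hc), self_mem_nhdsWithin]
    with r hr (har : a < r)
  rw [slope_def_field, ha, sub_zero] at hr
  exact (div_pos_iff_of_pos_right (sub_pos.mpr har)).mp hr

lemma forall_pos_of_forall_Ioo_pos {F : ℝ → ℝ} {a : ℝ} (hc : ContinuousOn F (Ioi a))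
    (hnear : ∀ᶠ r in 𝓝[>] a, 0 < F r) (hstep : ∀ b > a, (∀ r ∈ Ioo a b, 0 < F r) → 0 < F b) :
    ∀ r > a, 0 < F r := by
  by_contra! ⟨r₁, hr₁, hFr₁⟩
  obtain ⟨u, hu, hposu⟩ := mem_nhdsGT_iff_exists_Ioo_subset.mp hnear
  have hur₁ : u ≤ r₁ := not_lt.mp fun h => (hFr₁.trans_lt (hposu ⟨hr₁, h⟩)).false
  obtain ⟨δ, hδ⟩ := exists_between hu.out
  -- the first zero is the least element of the compact set `{r ∈ [δ, r₁] | F r ≤ 0}`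
  have hZ : IsCompact (Icc δ r₁ ∩ F ⁻¹' Iic 0) :=
    isCompact_Icc.of_isClosed_subset
      ((hc.mono fun x hx => hδ.1.trans_le hx.1).preimage_isClosed_of_isClosed isClosed_Icc
        isClosed_Iic) inter_subset_left
  obtain ⟨b, ⟨⟨hbδ, hbr₁⟩, hFb⟩, hleast⟩ := hZ.exists_isLeast ⟨r₁, ⟨by linarith, le_rfl⟩, hFr₁⟩
  have hpos : ∀ r ∈ Ioo a b, 0 < F r := by
    intro r ⟨har, hrb⟩
    by_contra! hFr
    rcases lt_or_ge r δ with hrδ | hδr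
    · exact (hposu ⟨har, hrδ.trans hδ.2⟩).not_ge hFr
    · exact hrb.not_ge (hleast ⟨⟨hδr, by linarith⟩, hFr⟩)
  exact (hstep b (hδ.1.trans_le hbδ) hpos).not_ge hFb

lemma pos_of_monotoneOn_mul_deriv {F w : ℝ → ℝ} {a b : ℝ} (hab : a < b)
    (hFc : ContinuousOn F (Icc a b)) (hFd : DifferentiableOn ℝ F (Ioo a b)) (ha : F a = 0)
    (hpos : ∀ r ∈ Ioo a b, 0 < F r) (hw : ∀ r ∈ Ioo a b, 0 < w r)
    (hmono : MonotoneOn (fun r => w r * deriv F r) (Ioo a b)) : 0 < F b := by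
  by_contra! hFb
  obtain ⟨e, he⟩ := exists_between hab
  obtain ⟨c, ⟨hec, hcb⟩, hc⟩ := exists_deriv_eq_slope F he.2
    (hFc.mono (Icc_subset_Icc he.1.le le_rfl)) (hFd.mono (Ioo_subset_Ioo he.1.le le_rfl))
  have hcab : c ∈ Ioo a b := ⟨he.1.trans hec, hcb⟩
  obtain ⟨d, ⟨had, hdc⟩, hd⟩ := exists_deriv_eq_slope F hcab.1
    (hFc.mono (Icc_subset_Icc le_rfl hcb.le)) (hFd.mono (Ioo_subset_Ioo le_rfl hcb.le))
  have hdab : d ∈ Ioo a b := ⟨had, hdc.trans hcb⟩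
  have hFc' : deriv F c < 0 := by
    rw [hc]; exact div_neg_of_neg_of_pos (by linarith [hpos e he]) (by linarith)
  have hFd' : 0 < deriv F d := by
    rw [hd, ha, sub_zero]; exact div_pos (hpos c hcab) (by linarith)
  linarith [hmono hdab hcab hdc.le, mul_pos (hw d hdab) hFd',
    mul_neg_of_pos_of_neg (hw c hcab) hFc']

/-- Positivity of the radial Steklov eigenfunction profile: if `F` solves
`F'' + (n-1)(sn_κ'/sn_κ) F' - ((n-1)/sn_κ²) F = 0` on `(0,∞)` with `F(0)=0`, `F'(0)=1`
(right derivative), then `F > 0` on `(0,∞)`. -/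
theorem steklov_radial_profile_pos
    (κ : ℝ) (hκ : κ ≤ 0) (n : ℕ) (hn : 2 ≤ n) (F : ℝ → ℝ)
    (hFc : ContinuousOn F (Ici 0))
    (hF2 : ContDiffOn ℝ 2 F (Ioi 0))
    (hF0 : F 0 = 0)
    (hF'0 : HasDerivWithinAt F 1 (Ici 0) 0)
    (hODE : ∀ r > 0, deriv (deriv F) r
      + ((n : ℝ) - 1) * (deriv (snk κ) r / snk κ r) * deriv F r
      - (((n : ℝ) - 1) / (snk κ r) ^ 2) * F r = 0) :
    ∀ r > 0, 0 < F r := by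
  have hm : (n : ℝ) - 1 = ((n - 1 : ℕ) : ℝ) := by rw [Nat.cast_sub (by omega), Nat.cast_one]
  have hF' : ∀ r > 0, HasDerivAt F (deriv F r) r := fun r hr =>
    ((hF2.differentiableOn (by norm_num)).differentiableAt (Ioi_mem_nhds hr)).hasDerivAt
  have hF'' : ∀ r > 0, HasDerivAt (deriv F) (deriv (deriv F) r) r := fun r hr =>
    (((hF2.deriv_of_isOpen isOpen_Ioi (by norm_num : (1 : WithTop ℕ∞) + 1 ≤ 2)).differentiableOn
      one_ne_zero).differentiableAt (Ioi_mem_nhds hr)).hasDerivAt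
  have hg : ∀ r > 0, HasDerivAt (fun t => snk κ t ^ (n - 1) * deriv F t)
      ((n - 1 : ℕ) * snk κ r ^ (n - 1) / snk κ r ^ 2 * F r) r := fun r hr =>
    hasDerivAt_pow_mul_deriv_of_ode (differentiable_snk κ r) (snk_pos hκ hr).ne' (hF'' r hr)
      (hm ▸ hODE r hr)
  refine forall_pos_of_forall_Ioo_pos (fun r hr => (hF' r hr).continuousAt.continuousWithinAt)
    (eventually_pos_of_hasDerivWithinAt_Ici hF0 hF'0 one_pos) fun b hb hpos => ?_
  refine pos_of_monotoneOn_mul_deriv (w := fun r => snk κ r ^ (n - 1)) hb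
    (hFc.mono Icc_subset_Ici_self)
    (fun r hr => (hF' r hr.1).differentiableAt.differentiableWithinAt) hF0 hpos
    (fun r hr => pow_pos (snk_pos hκ hr.1) _) ?_
  refine monotoneOn_of_hasDerivWithinAt_nonneg (convex_Ioo 0 b)
    (fun r hr => (hg r hr.1).continuousAt.continuousWithinAt)
    (fun r hr => (hg r (interior_Ioo.subset hr).1).hasDerivWithinAt) fun r hr => ?_
  rw [interior_Ioo] at hr
  have hs := snk_pos hκ hr.1
  exact mul_nonneg (by positivity) (hpos r hr).le
end
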